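/- Let F be a nonzero homogeneous polynomial of degree n in three variables X₀, X₁, X₂ over ℂ. For j = 0, 1, 2 let mⱼ be the multiplicity of the plane curve {F = 0} at the j-th coordinate point, namely mⱼ is the minimum, over all exponent vectors d in the support of F, of the sum of the exponents of the two variables other than Xⱼ. Let F' be the polynomial obtained from F by the quadratic substitution X₀ ↦ X₁X₂, X₁ ↦ X₀X₂, X₂ ↦ X₀X₁. Then the monomial X₀^{m₀} X₁^{m₁} X₂^{m₂} divides F'; that is, F' = X₀^{m₀} X₁^{m₁} X₂^{m₂} · G for some polynomial G ∈ ℂ[X₀, X₁, X₂]. -/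

import Mathlib

/-!
The substitution `Xᵢ ↦ ∏_{j ≠ i} Xⱼ` sends the monomial `X^d` to `∏ⱼ Xⱼ^(∑_{i ≠ j} dᵢ)`, and by
definition of the multiplicities every such exponent of `Xⱼ` is at least `mⱼ`; so the monomial
`∏ⱼ Xⱼ^mⱼ` divides the image of every term of `F`, in any number of variables.
-/

open MvPolynomial Finset

namespace MvPolynomial

variable {σ R : Type*} [Fintype σ] [DecidableEq σ] [CommSemiring R]

variable (σ R) in
/-- The substitution `Xᵢ ↦ ∏_{j ≠ i} Xⱼ` underlying the standard Cremona transformation. -/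
noncomputable def cremonaSubst (i : σ) : MvPolynomial σ R :=
  ∏ j ∈ univ.erase i, X j

theorem cremonaSubst_fin_three :
    cremonaSubst (Fin 3) R = ![X 1 * X 2, X 0 * X 2, X 0 * X 1] := by
  ext1 i
  fin_cases i <;> simp [cremonaSubst, ← filter_ne', prod_filter, Fin.prod_univ_three]

theorem bind₁_cremonaSubst_monomial (d : σ →₀ ℕ) (c : R) :
    bind₁ (cremonaSubst σ R) (monomial d c) =
      C c * ∏ j, X j ^ ∑ i ∈ univ.erase j, d i := by
  rw [bind₁_monomial, prod_subset (subset_univ _) (by simp_all)]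
  simp only [cremonaSubst, ← prod_pow, ← prod_pow_eq_pow_sum]
  congr 1
  exact prod_comm' (by simp [ne_comm])

theorem prod_X_pow_dvd_bind₁_cremonaSubst (F : MvPolynomial σ R) (m : σ → ℕ)
    (hm : ∀ d ∈ F.support, ∀ j, m j ≤ ∑ i ∈ univ.erase j, d i) :
    ∏ j, X j ^ m j ∣ bind₁ (cremonaSubst σ R) F := by
  conv_rhs => rw [F.as_sum, map_sum]
  refine dvd_sum fun d hd => ?_
  rw [bind₁_cremonaSubst_monomial]
  exact Dvd.dvd.mul_left (prod_dvd_prod_of_dvd _ _ fun j _ => pow_dvd_pow _ (hm d hd j)) _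

end MvPolynomial

theorem monomial_divides_quadratic_subst_general (F : MvPolynomial (Fin 3) ℂ)
    (hF0 : F ≠ 0) (m : Fin 3 → ℕ)
    (hm : ∀ j, m j = F.support.inf' (MvPolynomial.support_nonempty.mpr hF0)
      (fun d => ∑ i ∈ Finset.univ.erase j, d i)) :
    (X 0 ^ m 0 * X 1 ^ m 1 * X 2 ^ m 2 : MvPolynomial (Fin 3) ℂ) ∣
      MvPolynomial.bind₁
        (![X 1 * X 2, X 0 * X 2, X 0 * X 1] : Fin 3 → MvPolynomial (Fin 3) ℂ) F := by
  rw [← cremonaSubst_fin_three, ← Fin.prod_univ_three (fun j => X j ^ m j)]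
  exact prod_X_pow_dvd_bind₁_cremonaSubst F m fun d hd j => hm j ▸ inf'_le _ hd

/-- Let `F` be a nonzero homogeneous polynomial of degree `n` in `X₀, X₁, X₂`, let `mⱼ` be the
multiplicity of `{F = 0}` at the `j`-th coordinate point (the minimum over exponent vectors `d`
in the support of `F` of the sum of the exponents of the two variables other than `Xⱼ`), and let
`F'` be the image of `F` under the quadratic substitution `X₀ ↦ X₁X₂, X₁ ↦ X₀X₂, X₂ ↦ X₀X₁`.
Then `X₀^{m₀} X₁^{m₁} X₂^{m₂}` divides `F'`. -/
theorem monomial_divides_quadratic_subst (F : MvPolynomial (Fin 3) ℂ) (n : ℕ)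
    (hF : F.IsHomogeneous n) (hF0 : F ≠ 0) (m : Fin 3 → ℕ)
    (hm : ∀ j, m j = F.support.inf' (MvPolynomial.support_nonempty.mpr hF0)
      (fun d => ∑ i ∈ Finset.univ.erase j, d i)) :
    (X 0 ^ m 0 * X 1 ^ m 1 * X 2 ^ m 2 : MvPolynomial (Fin 3) ℂ) ∣
      MvPolynomial.bind₁
        (![X 1 * X 2, X 0 * X 2, X 0 * X 1] : Fin 3 → MvPolynomial (Fin 3) ℂ) F :=
  monomial_divides_quadratic_subst_general F hF0 m hm
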